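/- arXiv:1303.5113 — 2 statements merged into one kernel-verified Lean document; each statement's English description precedes it below -/
import Mathlib

section
/- Let K : ℝ^d \ {0} → ℝ be of order ζ ≤ 0 with respect to a scaling s (so |K(z)| ≤ N ‖z‖_s^{ζ} and |∂_i K(z)| ≤ N ‖z‖_s^{ζ - s_i} for all i). Then for every α ∈ [0,1] there exists a constant C such that for all distinct nonzero z, z̄ one has |K(z) - K(z̄)| ≤ C N ‖z - z̄‖_s^{α} (‖z‖_s^{ζ-α} + ‖z̄‖_s^{ζ-α}). -/
/-- The scaled norm `‖x‖_s = ∑_i |x_i|^{1/s_i}` on `ℝ^d`. -/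
noncomputable def sNorm {d : ℕ} (s : Fin d → ℕ) (x : Fin d → ℝ) : ℝ :=
  ∑ i, |x i| ^ ((s i : ℝ)⁻¹)

/-- Iterated partial derivative `D^ℓ f` along the list of coordinate directions `ℓ`. -/
noncomputable def mderiv {d : ℕ} : List (Fin d) → ((Fin d → ℝ) → ℝ) → (Fin d → ℝ) → ℝ
  | [], f => f
  | i :: ℓ, f => fun x => fderiv ℝ (mderiv ℓ f) x (Pi.single i 1)

open Real Finset

lemma add_rpow_le' {a b p : ℝ} (ha : 0 ≤ a) (hb : 0 ≤ b) (hp : 0 ≤ p) (hp1 : p ≤ 1) :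
    (a + b) ^ p ≤ a ^ p + b ^ p := by
  lift a to NNReal using ha
  lift b to NNReal using hb
  rw [← NNReal.coe_add, ← NNReal.coe_rpow, ← NNReal.coe_rpow, ← NNReal.coe_rpow,
    ← NNReal.coe_add, NNReal.coe_le_coe]
  exact NNReal.rpow_add_le_add_rpow a b hp hp1

variable {d : ℕ} {s : Fin d → ℕ}

lemma sNorm_nonneg (s : Fin d → ℕ) (x : Fin d → ℝ) : 0 ≤ sNorm s x :=
  Finset.sum_nonneg fun i _ => Real.rpow_nonneg (abs_nonneg _) _

lemma sNorm_zero (hs : ∀ i, 0 < s i) : sNorm s (0 : Fin d → ℝ) = 0 := by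
  unfold sNorm
  refine Finset.sum_eq_zero fun i _ => ?_
  rw [Pi.zero_apply, abs_zero, Real.zero_rpow]
  exact inv_ne_zero (Nat.cast_ne_zero.mpr (hs i).ne')

lemma sNorm_pos (hs : ∀ i, 0 < s i) {x : Fin d → ℝ} (hx : x ≠ 0) : 0 < sNorm s x := by
  obtain ⟨i, hi⟩ := Function.ne_iff.mp hx
  refine Finset.sum_pos' (fun j _ => Real.rpow_nonneg (abs_nonneg _) _) ⟨i, Finset.mem_univ i, ?_⟩
  exact Real.rpow_pos_of_pos (abs_pos.mpr hi) _

lemma sNorm_neg (x : Fin d → ℝ) : sNorm s (-x) = sNorm s x := by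
  unfold sNorm; simp

lemma sNorm_add_le (hs : ∀ i, 0 < s i) (x y : Fin d → ℝ) :
    sNorm s (x + y) ≤ sNorm s x + sNorm s y := by
  unfold sNorm
  rw [← Finset.sum_add_distrib]
  refine Finset.sum_le_sum fun i _ => ?_
  calc |(x + y) i| ^ ((s i : ℝ)⁻¹) ≤ (|x i| + |y i|) ^ ((s i : ℝ)⁻¹) := by
        apply Real.rpow_le_rpow (abs_nonneg _) (abs_add_le _ _)
        positivity
    _ ≤ |x i| ^ ((s i : ℝ)⁻¹) + |y i| ^ ((s i : ℝ)⁻¹) := by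
        apply add_rpow_le' (abs_nonneg _) (abs_nonneg _) (by positivity)
        rw [inv_le_one_iff₀]
        right
        exact_mod_cast hs i

lemma sNorm_smul_le (hs : ∀ i, 0 < s i) {t : ℝ} (ht0 : 0 ≤ t) (ht1 : t ≤ 1)
    (v : Fin d → ℝ) : sNorm s (t • v) ≤ sNorm s v := by
  unfold sNorm
  refine Finset.sum_le_sum fun i _ => ?_
  rw [Pi.smul_apply, smul_eq_mul, abs_mul, Real.mul_rpow (abs_nonneg _) (abs_nonneg _)]
  calc |t| ^ ((s i : ℝ)⁻¹) * |v i| ^ ((s i : ℝ)⁻¹)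
      ≤ 1 * |v i| ^ ((s i : ℝ)⁻¹) := by
        apply mul_le_mul_of_nonneg_right _ (Real.rpow_nonneg (abs_nonneg _) _)
        apply Real.rpow_le_one (abs_nonneg _) (by rw [abs_of_nonneg ht0]; exact ht1)
        positivity
    _ = _ := one_mul _

lemma abs_le_sNorm_rpow (hs : ∀ i, 0 < s i) (x : Fin d → ℝ) (i : Fin d) :
    |x i| ≤ sNorm s x ^ (s i : ℝ) := by
  have h1 : |x i| ^ ((s i : ℝ)⁻¹) ≤ sNorm s x :=
    Finset.single_le_sum (f := fun j => |x j| ^ ((s j : ℝ)⁻¹))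
      (fun j _ => Real.rpow_nonneg (abs_nonneg _) _) (Finset.mem_univ i)
  calc |x i| = (|x i| ^ ((s i : ℝ)⁻¹)) ^ (s i : ℝ) := by
        rw [← Real.rpow_mul (abs_nonneg _),
          inv_mul_cancel₀ (Nat.cast_ne_zero.mpr (hs i).ne' : (s i : ℝ) ≠ 0), Real.rpow_one]
    _ ≤ sNorm s x ^ (s i : ℝ) :=
        Real.rpow_le_rpow (Real.rpow_nonneg (abs_nonneg _) _) h1 (by positivity)

/-- Lemma 10.18: if `K` is of order `ζ ≤ 0` (so `|K(z)| ≤ N ‖z‖_s^ζ` and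
`|∂_i K(z)| ≤ N ‖z‖_s^{ζ - s_i}`), then for every `α ∈ [0,1]` there is a constant `C` with
`|K(z) - K(z̄)| ≤ C N ‖z - z̄‖_s^α (‖z‖_s^{ζ-α} + ‖z̄‖_s^{ζ-α})` for all distinct nonzero
`z, z̄`. -/
theorem stmt_8 {d : ℕ} (s : Fin d → ℕ) (hs : ∀ i, 0 < s i) (ζ : ℝ) (hζ : ζ ≤ 0)
    (α : ℝ) (hα : α ∈ Set.Icc (0 : ℝ) 1) :
    ∃ C : ℝ, ∀ (K : (Fin d → ℝ) → ℝ) (N : ℝ),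
      DifferentiableOn ℝ K {x | x ≠ 0} →
      (∀ x : Fin d → ℝ, x ≠ 0 → |K x| ≤ N * sNorm s x ^ ζ) →
      (∀ i : Fin d, ∀ x : Fin d → ℝ, x ≠ 0 →
        |mderiv [i] K x| ≤ N * sNorm s x ^ (ζ - (s i : ℝ))) →
      ∀ z z' : Fin d → ℝ, z ≠ 0 → z' ≠ 0 → z ≠ z' →
        |K z - K z'| ≤
          C * N * sNorm s (z - z') ^ α * (sNorm s z ^ (ζ - α) + sNorm s z' ^ (ζ - α)) := by
  obtain ⟨hα0, hα1⟩ := hα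
  refine ⟨(d : ℝ) * 2 ^ (α - ζ) + 3, ?_⟩
  intro K N hdiff hK0 hK1 z z' hz hz' hne
  set A := sNorm s z with hAdef
  set B := sNorm s z' with hBdef
  set r := sNorm s (z - z') with hrdef
  have hA : 0 < A := sNorm_pos hs hz
  have hB : 0 < B := sNorm_pos hs hz'
  have hr : 0 < r := sNorm_pos hs (sub_ne_zero.mpr hne)
  have hN : 0 ≤ N := by
    have h1 := hK0 z hz
    have h2 : (0:ℝ) < A ^ ζ := Real.rpow_pos_of_pos hA ζ
    nlinarith [abs_nonneg (K z)]
  have hra : 0 < r ^ α := Real.rpow_pos_of_pos hr α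
  have hAza : 0 < A ^ (ζ - α) := Real.rpow_pos_of_pos hA _
  have hBza : 0 < B ^ (ζ - α) := Real.rpow_pos_of_pos hB _
  have hcoef : (0:ℝ) ≤ (d:ℝ) * 2 ^ (α - ζ) := by positivity
  have hswap : sNorm s (z' - z) = r := by
    rw [← neg_sub z z', sNorm_neg]
  have hBA : B ≤ A + r := by
    have h := sNorm_add_le hs z (z' - z)
    have e : z + (z' - z) = z' := by abel
    rw [e, hswap] at h
    exact h
  rcases le_or_gt (2 * r) A with hcase | hcase
  · -- gradient case
    set v := z' - z with hvdef
    have hopen : IsOpen {x : Fin d → ℝ | x ≠ 0} := isOpen_ne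
    have hseg : ∀ t ∈ Set.Icc (0:ℝ) 1, A / 2 ≤ sNorm s (z + t • v) := by
      intro t ht
      have h1 : sNorm s (t • v) ≤ r := by
        calc sNorm s (t • v) ≤ sNorm s v := sNorm_smul_le hs ht.1 ht.2 v
          _ = r := hswap
      have h3 := sNorm_add_le hs (z + t • v) (-(t • v))
      rw [add_neg_cancel_right, sNorm_neg] at h3
      rw [← hAdef] at h3
      linarith
    have hxne : ∀ t ∈ Set.Icc (0:ℝ) 1, z + t • v ≠ 0 := by
      intro t ht h0
      have h4 := hseg t ht
      rw [h0, sNorm_zero hs] at h4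
      linarith
    set g' : ℝ → ℝ := fun t => fderiv ℝ K (z + t • v) v with hg'
    have hderiv : ∀ t ∈ Set.Icc (0:ℝ) 1, HasDerivAt (fun u => K (z + u • v)) (g' t) t := by
      intro t ht
      have hpath : HasDerivAt (fun u : ℝ => z + u • v) v t := by
        simpa using ((hasDerivAt_id t).smul_const v).const_add z
      have hKd : DifferentiableAt ℝ K (z + t • v) :=
        hdiff.differentiableAt (hopen.mem_nhds (hxne t ht))
      exact hKd.hasFDerivAt.comp_hasDerivAt t hpath
    set Cb : ℝ := (d : ℝ) * (2 ^ (α - ζ) * N * r ^ α * A ^ (ζ - α)) with hCb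
    have hA2 : (0:ℝ) < A / 2 := by linarith
    have hr2 : r ≤ A / 2 := by linarith
    have hbound : ∀ t ∈ Set.Icc (0:ℝ) 1, |g' t| ≤ Cb := by
      intro t ht
      have hx0 : z + t • v ≠ 0 := hxne t ht
      have hxA : A / 2 ≤ sNorm s (z + t • v) := hseg t ht
      have hveq : v = ∑ i, v i • (Pi.single i (1:ℝ) : Fin d → ℝ) := by
        ext j
        simp [Pi.single_apply, eq_comm]
      have hv : ∀ L : (Fin d → ℝ) →L[ℝ] ℝ, L v = ∑ i, v i * L (Pi.single i 1) := by
        intro L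
        have h8 : L v = L (∑ i, v i • (Pi.single i (1:ℝ) : Fin d → ℝ)) := by rw [← hveq]
        rw [h8, map_sum]
        simp [smul_eq_mul]
      have hterm : ∀ i : Fin d, |v i * fderiv ℝ K (z + t • v) (Pi.single i 1)|
          ≤ 2 ^ (α - ζ) * N * r ^ α * A ^ (ζ - α) := by
        intro i
        have hsi1 : (1:ℝ) ≤ (s i : ℝ) := by exact_mod_cast hs i
        have hvi : |v i| ≤ r ^ (s i : ℝ) := by
          have h5 := abs_le_sNorm_rpow hs v i
          rwa [hvdef, hswap] at h5
        have hdi : |fderiv ℝ K (z + t • v) (Pi.single i 1)|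
            ≤ N * sNorm s (z + t • v) ^ (ζ - (s i : ℝ)) := hK1 i (z + t • v) hx0
        have hmono : sNorm s (z + t • v) ^ (ζ - (s i:ℝ)) ≤ (A/2) ^ (ζ - (s i:ℝ)) :=
          Real.rpow_le_rpow_of_nonpos hA2 hxA (by linarith)
        have key : r ^ (s i:ℝ) * (N * (A/2) ^ (ζ - (s i:ℝ)))
            ≤ 2 ^ (α - ζ) * N * r ^ α * A ^ (ζ - α) := by
          have e1 : r ^ (s i:ℝ) = r ^ α * r ^ ((s i:ℝ) - α) := by
            rw [← Real.rpow_add hr]; ring_nf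
          have e2 : r ^ ((s i:ℝ) - α) ≤ (A/2) ^ ((s i:ℝ) - α) :=
            Real.rpow_le_rpow hr.le hr2 (by linarith)
          have e3 : (A/2) ^ ((s i:ℝ) - α) * (A/2) ^ (ζ - (s i:ℝ)) = (A/2) ^ (ζ - α) := by
            rw [← Real.rpow_add hA2]; ring_nf
          have e4 : (A/2) ^ (ζ - α) = 2 ^ (α - ζ) * A ^ (ζ - α) := by
            rw [Real.div_rpow hA.le (by norm_num : (0:ℝ) ≤ 2), div_eq_mul_inv,
              ← Real.rpow_neg (by norm_num : (0:ℝ) ≤ 2), neg_sub, mul_comm]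
          have e5 : (0:ℝ) ≤ (A/2) ^ (ζ - (s i:ℝ)) := Real.rpow_nonneg hA2.le _
          calc r ^ (s i:ℝ) * (N * (A/2) ^ (ζ - (s i:ℝ)))
              = N * (r ^ α * (r ^ ((s i:ℝ) - α) * (A/2) ^ (ζ - (s i:ℝ)))) := by rw [e1]; ring
            _ ≤ N * (r ^ α * ((A/2) ^ ((s i:ℝ) - α) * (A/2) ^ (ζ - (s i:ℝ)))) := by
                apply mul_le_mul_of_nonneg_left _ hN
                apply mul_le_mul_of_nonneg_left _ hra.le
                exact mul_le_mul_of_nonneg_right e2 e5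
            _ = N * (r ^ α * (A/2) ^ (ζ - α)) := by rw [e3]
            _ = 2 ^ (α - ζ) * N * r ^ α * A ^ (ζ - α) := by rw [e4]; ring
        calc |v i * fderiv ℝ K (z + t • v) (Pi.single i 1)|
            = |v i| * |fderiv ℝ K (z + t • v) (Pi.single i 1)| := abs_mul _ _
          _ ≤ r ^ (s i:ℝ) * (N * (A/2) ^ (ζ - (s i:ℝ))) := by
              apply mul_le_mul hvi (hdi.trans _) (abs_nonneg _) (Real.rpow_nonneg hr.le _)
              exact mul_le_mul_of_nonneg_left hmono hN
          _ ≤ 2 ^ (α - ζ) * N * r ^ α * A ^ (ζ - α) := key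
      calc |g' t| = |∑ i, v i * fderiv ℝ K (z + t • v) (Pi.single i 1)| :=
            congrArg abs (hv (fderiv ℝ K (z + t • v)))
        _ ≤ ∑ i, |v i * fderiv ℝ K (z + t • v) (Pi.single i 1)| :=
            Finset.abs_sum_le_sum_abs _ _
        _ ≤ ∑ _i : Fin d, 2 ^ (α - ζ) * N * r ^ α * A ^ (ζ - α) :=
            Finset.sum_le_sum fun i _ => hterm i
        _ = Cb := by
            rw [Finset.sum_const, Finset.card_univ, Fintype.card_fin, nsmul_eq_mul, hCb]
    have hMVT : |K z' - K z| ≤ Cb := by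
      have h6 := norm_image_sub_le_of_norm_deriv_le_segment_01'
        (f := fun u => K (z + u • v)) (f' := g') (C := Cb)
        (fun t ht => (hderiv t ht).hasDerivWithinAt)
        (fun t ht => by
          simpa [Real.norm_eq_abs] using hbound t (Set.Ico_subset_Icc_self ht))
      have e1 : z + v = z' := by rw [hvdef]; abel
      simpa [Real.norm_eq_abs, e1] using h6
    calc |K z - K z'| = |K z' - K z| := abs_sub_comm _ _
      _ ≤ Cb := hMVT
      _ = ((d:ℝ) * 2 ^ (α - ζ)) * N * r ^ α * A ^ (ζ - α) := by rw [hCb]; ring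
      _ ≤ ((d:ℝ) * 2 ^ (α - ζ) + 3) * N * r ^ α * A ^ (ζ - α) := by
          apply mul_le_mul_of_nonneg_right _ hAza.le
          apply mul_le_mul_of_nonneg_right _ hra.le
          apply mul_le_mul_of_nonneg_right _ hN
          linarith
      _ ≤ ((d:ℝ) * 2 ^ (α - ζ) + 3) * N * r ^ α * (A ^ (ζ - α) + B ^ (ζ - α)) := by
          apply mul_le_mul_of_nonneg_left (le_add_of_nonneg_right hBza.le)
          have h7 : (0:ℝ) ≤ ((d:ℝ) * 2 ^ (α - ζ) + 3) := by positivity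
          exact mul_nonneg (mul_nonneg h7 hN) hra.le
  · -- pointwise case
    have hKz := hK0 z hz
    have hKz' := hK0 z' hz'
    have h3 : (2:ℝ) ^ α ≤ 3 := by
      calc (2:ℝ) ^ α ≤ 2 ^ (1:ℝ) := Real.rpow_le_rpow_of_exponent_le (by norm_num) hα1
        _ ≤ 3 := by rw [Real.rpow_one]; norm_num
    have h3' : (3:ℝ) ^ α ≤ 3 := by
      calc (3:ℝ) ^ α ≤ 3 ^ (1:ℝ) := Real.rpow_le_rpow_of_exponent_le (by norm_num) hα1
        _ = 3 := Real.rpow_one 3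
    have hAz : A ^ ζ ≤ 3 * r ^ α * A ^ (ζ - α) := by
      have e : A ^ ζ = A ^ α * A ^ (ζ - α) := by rw [← Real.rpow_add hA]; ring_nf
      have h1 : A ^ α ≤ (2*r) ^ α := Real.rpow_le_rpow hA.le hcase.le hα0
      have h2 : (2*r:ℝ) ^ α = 2 ^ α * r ^ α :=
        Real.mul_rpow (by norm_num) hr.le
      calc A ^ ζ = A ^ α * A ^ (ζ - α) := e
        _ ≤ (2 ^ α * r ^ α) * A ^ (ζ - α) := by
            rw [← h2]; exact mul_le_mul_of_nonneg_right h1 hAza.le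
        _ ≤ 3 * r ^ α * A ^ (ζ - α) := by
            apply mul_le_mul_of_nonneg_right _ hAza.le
            exact mul_le_mul_of_nonneg_right h3 hra.le
    have hBz : B ^ ζ ≤ 3 * r ^ α * B ^ (ζ - α) := by
      have e : B ^ ζ = B ^ α * B ^ (ζ - α) := by rw [← Real.rpow_add hB]; ring_nf
      have hB3 : B ≤ 3 * r := by linarith
      have h1 : B ^ α ≤ (3*r) ^ α := Real.rpow_le_rpow hB.le hB3 hα0
      have h2 : (3*r:ℝ) ^ α = 3 ^ α * r ^ α :=
        Real.mul_rpow (by norm_num) hr.le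
      calc B ^ ζ = B ^ α * B ^ (ζ - α) := e
        _ ≤ (3 ^ α * r ^ α) * B ^ (ζ - α) := by
            rw [← h2]; exact mul_le_mul_of_nonneg_right h1 hBza.le
        _ ≤ 3 * r ^ α * B ^ (ζ - α) := by
            apply mul_le_mul_of_nonneg_right _ hBza.le
            exact mul_le_mul_of_nonneg_right h3' hra.le
    calc |K z - K z'| ≤ |K z| + |K z'| := by
          rw [sub_eq_add_neg]
          exact (abs_add_le _ _).trans (by rw [abs_neg])
      _ ≤ N * A ^ ζ + N * B ^ ζ := add_le_add hKz hKz'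
      _ ≤ N * (3 * r ^ α * A ^ (ζ - α)) + N * (3 * r ^ α * B ^ (ζ - α)) :=
          add_le_add (mul_le_mul_of_nonneg_left hAz hN) (mul_le_mul_of_nonneg_left hBz hN)
      _ = 3 * N * r ^ α * (A ^ (ζ - α) + B ^ (ζ - α)) := by ring
      _ ≤ ((d:ℝ) * 2 ^ (α - ζ) + 3) * N * r ^ α * (A ^ (ζ - α) + B ^ (ζ - α)) := by
          apply mul_le_mul_of_nonneg_right _ (by positivity)
          apply mul_le_mul_of_nonneg_right _ hra.le
          apply mul_le_mul_of_nonneg_right _ hN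
          linarith
end

section
/- Generalised Taylor formula: let A ⊂ ℕ^d be a 'lower set' (k ∈ A implies every ℓ ≤ k with ℓ ≠ k is in A), and let ∂A = {k ∉ A : k - e_{m(k)} ∈ A} where m(k) = min{j : k_j ≠ 0}. Then for every smooth function f on ℝ^d and every x ∈ ℝ^d, f(x) = ∑_{k ∈ A} (D^k f(0)/k!) x^k + ∑_{k ∈ ∂A} ∫ D^k f(y) Q^k(x, dy), where Q^k(x,·) is the explicit kernel that is a product of one-dimensional kernels: μ_{k_i}(x_i, dy_i) = 1_{[0,x_i]}(y_i) (x_i - y_i)^{k_i-1}/(k_i - 1)! dy_i for i ≤ m(k), and (x_i^{k_i}/k_i!) δ_0(dy_i) for i > m(k). In particular Q^k(x, ℝ^d) = x^k / k!. -/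
/-- The list of coordinate directions associated to a multiindex `k`: direction `i` is
repeated `k i` times. -/
def toList {d : ℕ} (k : Fin d → ℕ) : List (Fin d) :=
  (List.finRange d).flatMap fun i => List.replicate (k i) i

section TaylorProofAux

open Finset

/-! ### Smoothness of iterated derivatives -/

theorem mderiv_contDiff {d : ℕ} (ℓ : List (Fin d)) (f : (Fin d → ℝ) → ℝ)
    (hf : ContDiff ℝ (⊤ : ℕ∞) f) : ContDiff ℝ (⊤ : ℕ∞) (mderiv ℓ f) := by
  induction ℓ with
  | nil => exact hf
  | cons i ℓ ih =>
    show ContDiff ℝ (⊤ : ℕ∞) fun x => fderiv ℝ (mderiv ℓ f) x (Pi.single i 1)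
    exact (ih.fderiv_right (by simp)).clm_apply contDiff_const

/-! ### The embedding curves -/

def emb {d : ℕ} (x : Fin d → ℝ) (j : Fin d) (t : ℝ) : Fin d → ℝ :=
  fun i => if i < j then x i else if i = j then t else 0

lemma emb_eq {d : ℕ} (x : Fin d → ℝ) (j : Fin d) (t : ℝ) :
    emb x j t = (fun i => if i < j then x i else 0) + t • (Pi.single j 1 : Fin d → ℝ) := by
  funext i
  rcases lt_trichotomy i j with h | h | h
  · simp [emb, h, Pi.single_eq_of_ne h.ne]
  · subst h; simp [emb]
  · simp [emb, h.ne', not_lt.mpr h.le, Pi.single_eq_of_ne h.ne']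

lemma hasDerivAt_emb {d : ℕ} (x : Fin d → ℝ) (j : Fin d) (t : ℝ) :
    HasDerivAt (fun s => emb x j s) (Pi.single j 1) t := by
  simp only [emb_eq]
  simpa using ((hasDerivAt_id t).smul_const (Pi.single j 1 : Fin d → ℝ)).const_add
    (fun i => if i < j then x i else 0)

lemma continuous_emb {d : ℕ} (x : Fin d → ℝ) (j : Fin d) :
    Continuous (fun s => emb x j s) := by
  simp only [emb_eq]
  exact continuous_const.add (continuous_id.smul continuous_const)

lemma hasDerivAt_mderiv_emb {d : ℕ} (f : (Fin d → ℝ) → ℝ) (hf : ContDiff ℝ (⊤ : ℕ∞) f)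
    (ℓ : List (Fin d)) (x : Fin d → ℝ) (j : Fin d) (t : ℝ) :
    HasDerivAt (fun s => mderiv ℓ f (emb x j s)) (mderiv (j :: ℓ) f (emb x j t)) t := by
  have h1 : HasFDerivAt (mderiv ℓ f) (fderiv ℝ (mderiv ℓ f) (emb x j t)) (emb x j t) :=
    ((mderiv_contDiff ℓ f hf).differentiable (by simp) (emb x j t)).hasFDerivAt
  exact h1.comp_hasDerivAt t (hasDerivAt_emb x j t)

lemma continuous_mderiv_emb {d : ℕ} (f : (Fin d → ℝ) → ℝ) (hf : ContDiff ℝ (⊤ : ℕ∞) f)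
    (ℓ : List (Fin d)) (x : Fin d → ℝ) (j : Fin d) :
    Continuous (fun s => mderiv ℓ f (emb x j s)) :=
  ((mderiv_contDiff ℓ f hf).continuous).comp (continuous_emb x j)

lemma emb_zero {d : ℕ} (x : Fin d → ℝ) (j : Fin d) :
    emb x j 0 = fun i => if (i.val) < (j : ℕ) then x i else 0 := by
  funext i
  rcases lt_trichotomy i j with h | h | h
  · have h' : (i.val) < (j : ℕ) := h
    simp [emb, h, h']
  · subst h; simp [emb]
  · have h1 : ¬ i < j := not_lt.mpr h.le
    have h2 : ¬ (i.val) < (j : ℕ) := not_lt.mpr (le_of_lt h)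
    simp [emb, h1, h.ne', h2]

/-! ### `_root_.toList` and adding a unit multiindex -/

lemma flatMap_congr_mem {α β : Type*} (L : List α) (g h : α → List β)
    (H : ∀ a ∈ L, g a = h a) : L.flatMap g = L.flatMap h := by
  induction L with
  | nil => rfl
  | cons a L ih =>
    simp only [List.flatMap_cons]
    rw [H a (by simp), ih fun a ha => H a (by simp [ha])]

lemma aux_flatMap {d : ℕ} (k : Fin d → ℕ) (j : Fin d) (hk : ∀ i, i < j → k i = 0) :
    ∀ L : List (Fin d), L.Pairwise (· < ·) → j ∈ L →
      (L.flatMap fun i => List.replicate (k i + (Pi.single j 1 : Fin d → ℕ) i) i)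
        = j :: L.flatMap fun i => List.replicate (k i) i := by
  intro L
  induction L with
  | nil => simp
  | cons a L ih =>
    intro hp hj
    rcases List.mem_cons.mp hj with h | h
    · subst h
      simp only [List.flatMap_cons, Pi.single_eq_same, List.replicate_succ]
      have h2 : (L.flatMap fun i => List.replicate (k i + (Pi.single j 1 : Fin d → ℕ) i) i)
          = L.flatMap fun i => List.replicate (k i) i := by
        refine flatMap_congr_mem _ _ _ fun a ha => ?_
        have hja : j < a := (List.pairwise_cons.mp hp).1 a ha
        rw [Pi.single_eq_of_ne hja.ne', add_zero]
      rw [h2]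
      simp
    · have haj : a < j := (List.pairwise_cons.mp hp).1 j h
      have h0 : k a = 0 := hk a haj
      simp only [List.flatMap_cons]
      rw [Pi.single_eq_of_ne haj.ne, h0, ih (List.pairwise_cons.mp hp).2 h]
      simp

lemma toList_add_single {d : ℕ} (k : Fin d → ℕ) (j : Fin d) (hk : ∀ i, i < j → k i = 0) :
    _root_.toList (k + Pi.single j 1) = j :: _root_.toList k := by
  have := aux_flatMap k j hk _ (List.pairwise_lt_finRange d) (List.mem_finRange j)
  simpa [_root_.toList, Pi.add_apply] using this

lemma toList_zero {d : ℕ} : _root_.toList (0 : Fin d → ℕ) = [] := by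
  simp [_root_.toList]

/-! ### One-dimensional integration by parts step -/

lemma ibp_step (g g' : ℝ → ℝ) (hg : ∀ t, HasDerivAt g (g' t) t)
    (hgc : Continuous g) (hg'c : Continuous g') (a : ℝ) (n : ℕ) :
    ∫ t in (0:ℝ)..a, (a - t) ^ n / (Nat.factorial n : ℝ) * g t
      = g 0 * a ^ (n + 1) / (Nat.factorial (n + 1) : ℝ)
        + ∫ t in (0:ℝ)..a, (a - t) ^ (n + 1) / (Nat.factorial (n + 1) : ℝ) * g' t := by
  have hfac : (Nat.factorial (n+1) : ℝ) = (n+1) * Nat.factorial n := by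
    push_cast [Nat.factorial_succ]; ring
  have hfacn : (Nat.factorial n : ℝ) ≠ 0 := Nat.cast_ne_zero.mpr (Nat.factorial_ne_zero n)
  have hfacn1 : (Nat.factorial (n+1) : ℝ) ≠ 0 := Nat.cast_ne_zero.mpr (Nat.factorial_ne_zero _)
  set H : ℝ → ℝ := fun t => -((a - t) ^ (n+1) / (Nat.factorial (n+1) : ℝ)) * g t with hH
  have hder : ∀ t : ℝ, HasDerivAt H
      ((a - t) ^ n / (Nat.factorial n : ℝ) * g t
        - (a - t) ^ (n+1) / (Nat.factorial (n+1) : ℝ) * g' t) t := by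
    intro t
    have h1 : HasDerivAt (fun t : ℝ => a - t) (-1) t := (hasDerivAt_id t).const_sub a
    have h2 : HasDerivAt (fun t : ℝ => (a - t) ^ (n+1))
        (((n+1 : ℕ) : ℝ) * (a - t) ^ n * (-1)) t := h1.pow (n+1)
    have h3 : HasDerivAt (fun t : ℝ => -((a - t) ^ (n+1) / (Nat.factorial (n+1) : ℝ)))
        (-((((n+1 : ℕ) : ℝ) * (a - t) ^ n * (-1)) / (Nat.factorial (n+1) : ℝ))) t :=
      (h2.div_const _).neg
    have h4 := h3.mul (hg t)
    refine HasDerivAt.congr_deriv h4 ?_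
    rw [hfac]; push_cast; field_simp
    ring
  have hInt1 : IntervalIntegrable (fun t => (a - t) ^ n / (Nat.factorial n : ℝ) * g t)
      MeasureTheory.volume 0 a :=
    (Continuous.mul (by fun_prop) hgc).intervalIntegrable 0 a
  have hInt2 : IntervalIntegrable (fun t => (a - t) ^ (n+1) / (Nat.factorial (n+1) : ℝ) * g' t)
      MeasureTheory.volume 0 a :=
    (Continuous.mul (by fun_prop) hg'c).intervalIntegrable 0 a
  have hFTC := intervalIntegral.integral_eq_sub_of_hasDerivAt
    (f := H) (fun t _ => hder t) (hInt1.sub hInt2)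
  rw [intervalIntegral.integral_sub hInt1 hInt2] at hFTC
  have hHa : H a = 0 := by simp [hH]
  have hH0 : H 0 = -(a ^ (n+1) / (Nat.factorial (n+1) : ℝ)) * g 0 := by simp [hH]
  rw [hHa, hH0] at hFTC
  linear_combination hFTC

/-! ### The telescope (fundamental theorem of calculus in several variables) -/

lemma telescope {d : ℕ} (f : (Fin d → ℝ) → ℝ) (hf : ContDiff ℝ (⊤ : ℕ∞) f) (ℓ : List (Fin d))
    (x : Fin d → ℝ) : ∀ c : ℕ, c ≤ d →
    mderiv ℓ f (fun i => if (i.val) < c then x i else 0)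
      = mderiv ℓ f 0 + ∑ j ∈ Finset.univ.filter (fun j : Fin d => (j : ℕ) < c),
          ∫ t in (0:ℝ)..(x j), mderiv (j :: ℓ) f (emb x j t) := by
  intro c
  induction c with
  | zero => intro _; simp [show (fun _ : Fin d => (0:ℝ)) = 0 from rfl]
  | succ c ih =>
    intro hc
    have hcd : c < d := hc
    set jc : Fin d := ⟨c, hcd⟩ with hjc
    have e1 : emb x jc (x jc) = fun i => if (i.val) < c + 1 then x i else 0 := by
      funext i
      rcases lt_trichotomy i jc with h | h | h
      · have h' : (i.val) < c + 1 := Nat.lt_succ_of_lt h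
        simp [emb, h, h']
      · subst h; simp [emb, hjc]
      · have h1 : ¬ i < jc := not_lt.mpr h.le
        have h2 : ¬ (i.val) < c + 1 := by
          have : (c : ℕ) < (i.val) := h
          omega
        simp [emb, h1, h.ne', h2]
    have e2 : emb x jc 0 = fun i => if (i.val) < c then x i else 0 := by
      funext i
      rcases lt_trichotomy i jc with h | h | h
      · have h' : (i.val) < c := h
        simp [emb, h, h']
      · subst h; simp [emb, hjc]
      · have h1 : ¬ i < jc := not_lt.mpr h.le
        have h2 : ¬ (i.val) < c := by
          have : (c : ℕ) < (i.val) := h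
          omega
        simp [emb, h1, h.ne', h2]
    have hFTC := intervalIntegral.integral_eq_sub_of_hasDerivAt
      (f := fun s => mderiv ℓ f (emb x jc s))
      (fun t _ => hasDerivAt_mderiv_emb f hf ℓ x jc t)
      ((continuous_mderiv_emb f hf (jc :: ℓ) x jc).intervalIntegrable 0 (x jc))
    rw [e1, e2] at hFTC
    have hset : Finset.univ.filter (fun j : Fin d => (j : ℕ) < c + 1)
        = insert jc (Finset.univ.filter (fun j : Fin d => (j : ℕ) < c)) := by
      ext j
      simp only [mem_filter, mem_univ, true_and, mem_insert]
      constructor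
      · intro h
        rcases Nat.lt_succ_iff_lt_or_eq.mp h with h | h
        · exact Or.inr h
        · exact Or.inl (Fin.ext h)
      · rintro (h | h)
        · subst h; exact Nat.lt_succ_self c
        · exact Nat.lt_succ_of_lt h
    have hnotmem : jc ∉ Finset.univ.filter (fun j : Fin d => (j : ℕ) < c) := by simp [hjc]
    rw [hset, Finset.sum_insert hnotmem]
    have ihc := ih (le_of_lt hcd)
    linarith [hFTC, ihc]

/-! ### Taylor and boundary terms -/

noncomputable def tterm {d : ℕ} (f : (Fin d → ℝ) → ℝ) (x : Fin d → ℝ) (k : Fin d → ℕ) : ℝ :=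
  mderiv (_root_.toList k) f 0 * (∏ i, x i ^ k i) / ∏ i, (Nat.factorial (k i) : ℝ)

noncomputable def bterm {d : ℕ} (f : (Fin d → ℝ) → ℝ) (x : Fin d → ℝ)
    (p : (Fin d → ℕ) × Fin d) : ℝ :=
  (∏ i ∈ Finset.univ.filter fun i => p.2 < i,
      x i ^ p.1 i / (Nat.factorial (p.1 i) : ℝ)) *
    ∫ t in (0 : ℝ)..(x p.2),
      ((x p.2 - t) ^ (p.1 p.2 - 1) / (Nat.factorial (p.1 p.2 - 1) : ℝ)) *
        mderiv (_root_.toList p.1) f (emb x p.2 t)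

lemma prod_gt_eq {d : ℕ} (q : Fin d → ℝ) (j m : Fin d) (hjm : j < m)
    (hq : ∀ i, j < i → i < m → q i = 1) :
    ∏ i ∈ Finset.univ.filter (fun i => j < i), q i
      = q m * ∏ i ∈ Finset.univ.filter (fun i => m < i), q i := by
  have hm : m ∉ Finset.univ.filter (fun i : Fin d => m < i) := by simp
  rw [← Finset.prod_insert hm]
  refine (Finset.prod_subset ?_ ?_).symm
  · intro i hi
    simp only [mem_insert, mem_filter, mem_univ, true_and] at hi ⊢
    rcases hi with h | h
    · exact h ▸ hjm
    · exact hjm.trans h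
  · intro i hi hni
    simp only [mem_filter, mem_univ, true_and] at hi
    simp only [mem_insert, mem_filter, mem_univ, true_and, not_or, not_lt] at hni
    exact hq i hi (lt_of_le_of_ne hni.2 hni.1)

/-! ### Key analytic identity (see above) -/

lemma key {d : ℕ} (f : (Fin d → ℝ) → ℝ) (hf : ContDiff ℝ (⊤ : ℕ∞) f) (x : Fin d → ℝ)
    (k : Fin d → ℕ) (m : Fin d) (hm : k m ≠ 0) (hmin : ∀ i, i < m → k i = 0) :
    bterm f x (k, m) = tterm f x k
      + ∑ j ∈ Finset.univ.filter (fun j => j ≤ m), bterm f x (k + Pi.single j 1, j) := by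
  obtain ⟨n, hn⟩ : ∃ n, k m = n + 1 := Nat.exists_eq_succ_of_ne_zero hm
  have hn1 : k m - 1 = n := by omega
  -- (1) unfolding of `bterm f x (k, m)` plus integration by parts
  have hbm : bterm f x (k, m)
      = (∏ i ∈ Finset.univ.filter (fun i : Fin d => m < i),
          x i ^ k i / (Nat.factorial (k i) : ℝ))
        * ∫ t in (0:ℝ)..(x m), (x m - t) ^ (k m - 1) / (Nat.factorial (k m - 1) : ℝ)
            * mderiv (_root_.toList k) f (emb x m t) := rfl
  rw [hn1] at hbm
  have hibp := ibp_step (fun t => mderiv (_root_.toList k) f (emb x m t))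
      (fun t => mderiv (m :: _root_.toList k) f (emb x m t))
      (hasDerivAt_mderiv_emb f hf (_root_.toList k) x m)
      (continuous_mderiv_emb f hf (_root_.toList k) x m)
      (continuous_mderiv_emb f hf (m :: _root_.toList k) x m) (x m) n
  rw [← hn] at hibp
  -- (2) telescope for the value at `emb x m 0`
  have htel := telescope f hf (_root_.toList k) x m.val (le_of_lt m.isLt)
  rw [← emb_zero] at htel
  rw [htel] at hibp
  -- (3) the Taylor term
  have h3 : tterm f x k
      = mderiv (_root_.toList k) f 0 * ((x m ^ k m / (Nat.factorial (k m) : ℝ))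
        * ∏ i ∈ Finset.univ.filter (fun i : Fin d => m < i),
            x i ^ k i / (Nat.factorial (k i) : ℝ)) := by
    have h0 : tterm f x k = mderiv (_root_.toList k) f 0
        * ((∏ i, x i ^ k i) / ∏ i, (Nat.factorial (k i) : ℝ)) := by
      rw [tterm, mul_div_assoc]
    rw [h0, ← Finset.prod_div_distrib]
    congr 1
    rw [← Finset.prod_filter_mul_prod_filter_not Finset.univ (fun i : Fin d => m < i)
      (fun i => x i ^ k i / (Nat.factorial (k i) : ℝ))]
    have hset2 : Finset.univ.filter (fun i : Fin d => ¬ m < i)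
        = insert m (Finset.univ.filter (fun i : Fin d => i < m)) := by
      ext i
      simp only [mem_filter, mem_univ, true_and, mem_insert, not_lt]
      constructor
      · intro h
        rcases eq_or_lt_of_le h with h | h
        · exact Or.inl h
        · exact Or.inr h
      · rintro (h | h)
        · exact h.le
        · exact h.le
    rw [hset2, Finset.prod_insert (by simp)]
    have hone : ∏ i ∈ Finset.univ.filter (fun i : Fin d => i < m),
        x i ^ k i / (Nat.factorial (k i) : ℝ) = 1 :=
      Finset.prod_eq_one fun i hi => by simp [hmin i (by simpa using hi)]
    rw [hone, mul_one]
    ring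
  -- (4) boundary terms for `j < m`
  have h4 : ∀ j ∈ Finset.univ.filter (fun j : Fin d => (j : ℕ) < (m : ℕ)),
      bterm f x (k + Pi.single j 1, j)
        = (x m ^ k m / (Nat.factorial (k m) : ℝ))
          * (∏ i ∈ Finset.univ.filter (fun i : Fin d => m < i),
              x i ^ k i / (Nat.factorial (k i) : ℝ))
          * ∫ t in (0:ℝ)..(x j), mderiv (j :: _root_.toList k) f (emb x j t) := by
    intro j hj
    have hjm : j < m := by simp only [mem_filter, mem_univ, true_and] at hj; exact hj
    have hkj0 : k j = 0 := hmin j hjm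
    have hL : _root_.toList (k + Pi.single j 1) = j :: _root_.toList k :=
      toList_add_single k j fun i hi => hmin i (hi.trans hjm)
    have hb : bterm f x (k + Pi.single j 1, j)
        = (∏ i ∈ Finset.univ.filter (fun i : Fin d => j < i),
            x i ^ (k + Pi.single j 1 : Fin d → ℕ) i / (Nat.factorial ((k + Pi.single j 1 : Fin d → ℕ) i) : ℝ))
          * ∫ t in (0:ℝ)..(x j), (x j - t) ^ ((k + Pi.single j 1 : Fin d → ℕ) j - 1)
              / (Nat.factorial ((k + Pi.single j 1 : Fin d → ℕ) j - 1) : ℝ)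
              * mderiv (_root_.toList (k + Pi.single j 1)) f (emb x j t) := rfl
    have hkj1 : (k + Pi.single j 1 : Fin d → ℕ) j = 1 := by simp [hkj0]
    rw [hb, hL, hkj1]
    have hprod : (∏ i ∈ Finset.univ.filter (fun i : Fin d => j < i),
        x i ^ (k + Pi.single j 1 : Fin d → ℕ) i / (Nat.factorial ((k + Pi.single j 1 : Fin d → ℕ) i) : ℝ))
          = (x m ^ k m / (Nat.factorial (k m) : ℝ))
            * ∏ i ∈ Finset.univ.filter (fun i : Fin d => m < i),
                x i ^ k i / (Nat.factorial (k i) : ℝ) := by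
      have hcongr : ∀ i ∈ Finset.univ.filter (fun i : Fin d => j < i),
          x i ^ (k + Pi.single j 1 : Fin d → ℕ) i / (Nat.factorial ((k + Pi.single j 1 : Fin d → ℕ) i) : ℝ)
            = x i ^ k i / (Nat.factorial (k i) : ℝ) := by
        intro i hi
        have hji : j < i := by simpa using hi
        simp [Pi.single_eq_of_ne hji.ne']
      rw [Finset.prod_congr rfl hcongr]
      exact prod_gt_eq _ j m hjm fun i h1 h2 => by simp [hmin i h2]
    rw [hprod]
    norm_num
  -- (5) boundary term for `j = m`
  have h5 : bterm f x (k + Pi.single m 1, m)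
      = (∏ i ∈ Finset.univ.filter (fun i : Fin d => m < i),
          x i ^ k i / (Nat.factorial (k i) : ℝ))
        * ∫ t in (0:ℝ)..(x m), (x m - t) ^ (k m) / (Nat.factorial (k m) : ℝ)
            * mderiv (m :: _root_.toList k) f (emb x m t) := by
    have hL : _root_.toList (k + Pi.single m 1) = m :: _root_.toList k := toList_add_single k m hmin
    have hb : bterm f x (k + Pi.single m 1, m)
        = (∏ i ∈ Finset.univ.filter (fun i : Fin d => m < i),
            x i ^ (k + Pi.single m 1 : Fin d → ℕ) i / (Nat.factorial ((k + Pi.single m 1 : Fin d → ℕ) i) : ℝ))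
          * ∫ t in (0:ℝ)..(x m), (x m - t) ^ ((k + Pi.single m 1 : Fin d → ℕ) m - 1)
              / (Nat.factorial ((k + Pi.single m 1 : Fin d → ℕ) m - 1) : ℝ)
              * mderiv (_root_.toList (k + Pi.single m 1)) f (emb x m t) := rfl
    have hkm1 : (k + Pi.single m 1 : Fin d → ℕ) m - 1 = k m := by simp
    rw [hb, hL, hkm1]
    congr 1
    refine Finset.prod_congr rfl fun i hi => ?_
    have hmi : m < i := by simpa using hi
    simp [Pi.single_eq_of_ne hmi.ne']
  -- assemble
  have hsum : Finset.univ.filter (fun j : Fin d => j ≤ m)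
      = insert m (Finset.univ.filter (fun j : Fin d => (j : ℕ) < (m : ℕ))) := by
    ext j
    simp only [mem_filter, mem_univ, true_and, mem_insert]
    constructor
    · intro h
      rcases eq_or_lt_of_le h with h | h
      · exact Or.inl h
      · exact Or.inr h
    · rintro (h | h)
      · exact h.le
      · exact (Fin.lt_def.mpr h).le
  have hmnot : m ∉ Finset.univ.filter (fun j : Fin d => (j : ℕ) < (m : ℕ)) := by simp
  rw [hsum, Finset.sum_insert hmnot, Finset.sum_congr rfl h4, h5, h3, hbm, hibp,
    ← Finset.mul_sum]
  ring

/-! ### The boundary set -/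

lemma sub_add_single {d : ℕ} (k : Fin d → ℕ) (j : Fin d) (h : k j ≠ 0) :
    k - Pi.single j 1 + Pi.single j 1 = k := by
  funext i
  by_cases hij : i = j
  · subst hij
    simp only [Pi.add_apply, Pi.sub_apply, Pi.single_eq_same]
    omega
  · simp [Pi.single_eq_of_ne hij]

lemma add_single_sub {d : ℕ} (k : Fin d → ℕ) (j : Fin d) :
    k + Pi.single j 1 - Pi.single j 1 = k := by
  funext i
  by_cases hij : i = j
  · subst hij
    simp only [Pi.add_apply, Pi.sub_apply, Pi.single_eq_same]
    omega
  · simp [Pi.single_eq_of_ne hij]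

open Classical in
noncomputable def bdry {d : ℕ} (A : Finset (Fin d → ℕ)) : Finset ((Fin d → ℕ) × Fin d) :=
  ((A ×ˢ (Finset.univ : Finset (Fin d))).image (fun p => (p.1 + Pi.single p.2 1, p.2))).filter
    (fun q => q.1 ∉ A ∧ q.1 q.2 ≠ 0 ∧ (∀ i, i < q.2 → q.1 i = 0) ∧ q.1 - Pi.single q.2 1 ∈ A)

lemma mem_bdry {d : ℕ} (A : Finset (Fin d → ℕ)) (k : Fin d → ℕ) (j : Fin d) :
    (k, j) ∈ bdry A
      ↔ k ∉ A ∧ k j ≠ 0 ∧ (∀ i, i < j → k i = 0) ∧ k - Pi.single j 1 ∈ A := by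
  constructor
  · intro h
    exact (Finset.mem_filter.mp h).2
  · intro h
    refine Finset.mem_filter.mpr ⟨?_, h⟩
    refine Finset.mem_image.mpr ⟨(k - Pi.single j 1, j), ?_, ?_⟩
    · exact Finset.mem_product.mpr ⟨h.2.2.2, Finset.mem_univ j⟩
    · simp only []
      rw [sub_add_single k j h.2.1]

/-! ### The main induction -/

theorem main {d : ℕ} (f : (Fin d → ℝ) → ℝ) (hf : ContDiff ℝ (⊤ : ℕ∞) f) (x : Fin d → ℝ) :
    ∀ N : ℕ, ∀ A : Finset (Fin d → ℕ), A.card ≤ N → (0 : Fin d → ℕ) ∈ A →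
      (∀ k ∈ A, ∀ ℓ : Fin d → ℕ, ℓ ≤ k → ℓ ∈ A) →
      f x = (∑ k ∈ A, tterm f x k) + ∑ p ∈ bdry A, bterm f x p := by
  intro N
  induction N with
  | zero =>
    intro A hcard h0 _
    have := Finset.card_pos.mpr ⟨(0 : Fin d → ℕ), h0⟩
    omega
  | succ N ih =>
    intro A hcard h0 hlow
    by_cases hA0 : A = {0}
    · -- base case: `A = {0}`
      subst hA0
      -- Taylor term
      have ht0 : tterm f x (0 : Fin d → ℕ) = f 0 := by
        have h' : tterm f x (0 : Fin d → ℕ)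
            = mderiv (_root_.toList (0 : Fin d → ℕ)) f 0 * (∏ i : Fin d, x i ^ (0:ℕ))
              / ∏ i : Fin d, (Nat.factorial 0 : ℝ) := rfl
        rw [h', toList_zero]
        simp [mderiv]
      -- boundary set
      have hbd : bdry ({0} : Finset (Fin d → ℕ))
          = Finset.univ.image (fun j : Fin d => ((Pi.single j 1 : Fin d → ℕ), j)) := by
        ext p
        obtain ⟨k, j⟩ := p
        rw [mem_bdry]
        simp only [Finset.mem_singleton, Finset.mem_image, Finset.mem_univ, true_and]
        constructor
        · rintro ⟨hk, hkj, hminh, hsub⟩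
          refine ⟨j, ?_⟩
          have hkeq : k = Pi.single j 1 := by
            funext i
            by_cases hij : i = j
            · subst hij
              have h1 := congrFun hsub i
              simp only [Pi.sub_apply, Pi.single_eq_same, Pi.zero_apply] at h1
              simp only [Pi.single_eq_same]
              omega
            · have h1 := congrFun hsub i
              simp only [Pi.sub_apply, Pi.single_eq_of_ne hij, Pi.zero_apply] at h1
              simp only [Pi.single_eq_of_ne hij]
              omega
          rw [hkeq]
        · rintro ⟨j', heq⟩
          injection heq with h1 h2
          subst h2
          subst h1
          refine ⟨?_, by simp, fun i hij => Pi.single_eq_of_ne hij.ne 1, ?_⟩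
          · intro hc
            have := congrFun hc j'
            simp at this
          · have hz : (Pi.single j' 1 : Fin d → ℕ) - Pi.single j' 1 = 0 := by
              funext i; simp
            rw [hz]
      -- boundary terms
      have hbj : ∀ j : Fin d, bterm f x ((Pi.single j 1 : Fin d → ℕ), j)
          = ∫ t in (0:ℝ)..(x j), mderiv (j :: _root_.toList (0 : Fin d → ℕ)) f (emb x j t) := by
        intro j
        have hL : _root_.toList (Pi.single j 1 : Fin d → ℕ)
            = j :: _root_.toList (0 : Fin d → ℕ) := by
          have h' := toList_add_single (0 : Fin d → ℕ) j (fun i _ => rfl)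
          simpa using h'
        have hb : bterm f x ((Pi.single j 1 : Fin d → ℕ), j)
            = (∏ i ∈ Finset.univ.filter (fun i : Fin d => j < i),
                x i ^ (Pi.single j 1 : Fin d → ℕ) i
                  / (Nat.factorial ((Pi.single j 1 : Fin d → ℕ) i) : ℝ))
              * ∫ t in (0:ℝ)..(x j), (x j - t) ^ ((Pi.single j 1 : Fin d → ℕ) j - 1)
                  / (Nat.factorial ((Pi.single j 1 : Fin d → ℕ) j - 1) : ℝ)
                  * mderiv (_root_.toList (Pi.single j 1 : Fin d → ℕ)) f (emb x j t) := rfl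
        rw [hb, hL]
        have hone : (∏ i ∈ Finset.univ.filter (fun i : Fin d => j < i),
            x i ^ (Pi.single j 1 : Fin d → ℕ) i
              / (Nat.factorial ((Pi.single j 1 : Fin d → ℕ) i) : ℝ)) = 1 :=
          Finset.prod_eq_one fun i hi => by
            have : j < i := by simpa using hi
            simp [Pi.single_eq_of_ne this.ne']
        rw [hone, one_mul]
        simp
      -- telescope with `c = d`
      have htel := telescope f hf (_root_.toList (0 : Fin d → ℕ)) x d le_rfl
      have hx : (fun i : Fin d => if (i.val) < d then x i else 0) = x := by
        funext i; simp [i.isLt]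
      have huniv : Finset.univ.filter (fun j : Fin d => (j : ℕ) < d) = Finset.univ := by
        ext j; simp [j.isLt]
      rw [hx, huniv] at htel
      have hfx : mderiv (_root_.toList (0 : Fin d → ℕ)) f x = f x := by
        rw [toList_zero]; rfl
      have hf0 : mderiv (_root_.toList (0 : Fin d → ℕ)) f 0 = f 0 := by
        rw [toList_zero]; rfl
      rw [hfx, hf0] at htel
      rw [Finset.sum_singleton, ht0, hbd,
        Finset.sum_image (fun j1 _ j2 _ h => congrArg Prod.snd h)]
      rw [htel]
      congr 1
      exact (Finset.sum_congr rfl fun j _ => (hbj j)).symm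
    · -- inductive step
      -- pick a maximal nonzero multiindex
      have hex : ∃ k ∈ A, k ≠ 0 := by
        by_contra h
        push_neg at h
        exact hA0 (Finset.eq_singleton_iff_unique_mem.mpr ⟨h0, fun y hy => h y hy⟩)
      obtain ⟨k0, hk0A, hk0⟩ := hex
      obtain ⟨k, hkmem, hkmax⟩ := Finset.exists_max_image
        (A.filter (fun k => k ≠ 0)) (fun k => ∑ i, k i)
        ⟨k0, Finset.mem_filter.mpr ⟨hk0A, hk0⟩⟩
      have hkA : k ∈ A := (Finset.mem_filter.mp hkmem).1
      have hkne : k ≠ 0 := (Finset.mem_filter.mp hkmem).2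
      have hmax' : ∀ ℓ, ℓ ∈ A → k ≤ ℓ → ℓ = k := by
        intro ℓ hℓ hkℓ
        have hℓne : ℓ ≠ 0 := by
          intro h
          subst h
          exact hkne (le_antisymm hkℓ zero_le)
        have hdeg : ∑ i, ℓ i ≤ ∑ i, k i :=
          hkmax ℓ (Finset.mem_filter.mpr ⟨hℓ, hℓne⟩)
        by_contra hne
        have hex2 : ∃ i, k i < ℓ i := by
          by_contra h2
          push_neg at h2
          exact hne (funext fun i => le_antisymm (h2 i) (hkℓ i))
        obtain ⟨i0, hi0⟩ := hex2
        have := Finset.sum_lt_sum (fun i (_ : i ∈ Finset.univ) => hkℓ i)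
          ⟨i0, Finset.mem_univ i0, hi0⟩
        omega
      -- minimal nonzero index
      have hkexj : ∃ j, k j ≠ 0 := by
        by_contra h
        push_neg at h
        exact hkne (funext h)
      have hSne : (Finset.univ.filter (fun j : Fin d => k j ≠ 0)).Nonempty :=
        ⟨hkexj.choose, by simp [hkexj.choose_spec]⟩
      set m := (Finset.univ.filter (fun j : Fin d => k j ≠ 0)).min' hSne with hmdef
      have hm : k m ≠ 0 := by
        have := Finset.min'_mem _ hSne
        simpa using this
      have hminm : ∀ i, i < m → k i = 0 := by
        intro i hi
        by_contra h
        have : m ≤ i := Finset.min'_le _ i (by simp [h])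
        exact absurd hi (not_lt.mpr this)
      -- the smaller lower set
      set A' := A.erase k with hA'def
      have h0A' : (0 : Fin d → ℕ) ∈ A' :=
        Finset.mem_erase.mpr ⟨fun h => hkne h.symm, h0⟩
      have hlowA' : ∀ a ∈ A', ∀ ℓ : Fin d → ℕ, ℓ ≤ a → ℓ ∈ A' := by
        intro a ha ℓ hle
        have haA : a ∈ A := Finset.mem_of_mem_erase ha
        refine Finset.mem_erase.mpr ⟨?_, hlow a haA ℓ hle⟩
        intro h
        subst h
        exact (Finset.mem_erase.mp ha).1 (hmax' a haA hle)
      have hcard' : A'.card ≤ N := by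
        have hce : A'.card = A.card - 1 := by
          rw [hA'def]; exact Finset.card_erase_of_mem hkA
        omega
      have IH := ih A' hcard' h0A' hlowA'
      -- `(k, m)` belongs to the boundary of `A'`
      have hkm_mem : (k, m) ∈ bdry A' := by
        rw [mem_bdry]
        refine ⟨Finset.notMem_erase k A, hm, hminm, ?_⟩
        refine Finset.mem_erase.mpr ⟨?_, hlow k hkA _ ?_⟩
        · intro h
          have := congrFun h m
          simp only [Pi.sub_apply, Pi.single_eq_same] at this
          omega
        · intro i
          exact Nat.sub_le _ _
      -- splitting of the boundary of `A`
      have hsub_eq : ∀ j : Fin d, (k + Pi.single j 1 : Fin d → ℕ) - Pi.single j 1 = k :=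
        fun j => add_single_sub k j
      have hsplit : bdry A = ((bdry A').erase (k, m))
          ∪ (Finset.univ.filter (fun j : Fin d => j ≤ m)).image
              (fun j => ((k + Pi.single j 1 : Fin d → ℕ), j)) := by
        ext p
        obtain ⟨ℓ, j⟩ := p
        simp only [Finset.mem_union, Finset.mem_erase, Finset.mem_image, Finset.mem_filter,
          Finset.mem_univ, true_and, mem_bdry]
        constructor
        · rintro ⟨hnA, hj0, hjmin, hsubA⟩
          by_cases hsk : ℓ - Pi.single j 1 = k
          · right
            have hℓ : ℓ = k + Pi.single j 1 := by
              rw [← hsk, sub_add_single ℓ j hj0]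
            refine ⟨j, ?_, ?_⟩
            · by_contra hmj
              push_neg at hmj
              have hz : ℓ m = 0 := hjmin m hmj
              rw [hℓ] at hz
              simp only [Pi.add_apply, Pi.single_eq_of_ne hmj.ne] at hz
              omega
            · rw [hℓ]
          · left
            have hℓk : ℓ ≠ k := fun h => hnA (h ▸ hkA)
            refine ⟨?_, ?_, hj0, hjmin, Finset.mem_erase.mpr ⟨hsk, hsubA⟩⟩
            · intro h
              injection h with h1 _
              exact hℓk h1
            · intro h
              exact hnA (Finset.mem_of_mem_erase h)
        · rintro (⟨hne, hnA', hj0, hjmin, hsubA'⟩ | ⟨j', hj'm, heq⟩)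
          · have hsubA : ℓ - Pi.single j 1 ∈ A := Finset.mem_of_mem_erase hsubA'
            have hℓnA : ℓ ∉ A := by
              intro hℓA
              have hℓk : ℓ = k := by
                by_contra h
                exact hnA' (Finset.mem_erase.mpr ⟨h, hℓA⟩)
              subst hℓk
              have hjm : j = m := by
                have h1 : m ≤ j := Finset.min'_le _ j (by simp [hj0])
                rcases eq_or_lt_of_le h1 with h | h
                · exact h.symm
                · exact absurd (hjmin m h) hm
              exact hne (by rw [hjm])
            exact ⟨hℓnA, hj0, hjmin, hsubA⟩
          · injection heq with h1 h2
            subst h2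
            subst h1
            refine ⟨?_, by simp, ?_, ?_⟩
            · intro hA2
              have heqk := hmax' _ hA2 (by
                intro i
                by_cases hij : i = j'
                · subst hij; simp
                · simp [Pi.single_eq_of_ne hij])
              have := congrFun heqk j'
              simp only [Pi.add_apply, Pi.single_eq_same] at this
              omega
            · intro i hij
              have hz : k i = 0 := hminm i (lt_of_lt_of_le hij hj'm)
              simp [Pi.single_eq_of_ne hij.ne, hz]
            · rw [hsub_eq j']
              exact hkA
      have hdisj : Disjoint ((bdry A').erase (k, m))
          ((Finset.univ.filter (fun j : Fin d => j ≤ m)).image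
            (fun j => ((k + Pi.single j 1 : Fin d → ℕ), j))) := by
        rw [Finset.disjoint_right]
        intro p hp hp'
        obtain ⟨j, _, rfl⟩ := Finset.mem_image.mp hp
        have hmem := Finset.mem_of_mem_erase hp'
        rw [mem_bdry, hsub_eq j] at hmem
        exact (Finset.notMem_erase k A) hmem.2.2.2
      -- assemble
      rw [← Finset.sum_erase_add (bdry A') _ hkm_mem, key f hf x k m hm hminm] at IH
      rw [← Finset.sum_erase_add A (tterm f x) hkA, hsplit, Finset.sum_union hdisj,
        Finset.sum_image (fun j1 _ j2 _ h => congrArg Prod.snd h),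
        ← hA'def]
      linarith [IH]

end TaylorProofAux

/-- Proposition A.1 (generalised Taylor formula): let `A ⊂ ℕ^d` be a finite lower set
containing `0`, and let `B` be the set of pairs `(k, m(k))` with `k ∈ ∂A`, where
`m(k) = min{j : k_j ≠ 0}` and `∂A = {k ∉ A : k - e_{m(k)} ∈ A}`. Then for every smooth `f`,
`f(x) = ∑_{k ∈ A} (D^k f(0)/k!) x^k + ∑_{k ∈ ∂A} ∫ D^k f(y) Q^k(x, dy)`, where the kernel
`Q^k(x,·)` is the product measure `∏_i μ^k_i(x_i, ·)` with `μ^k_i = δ_{x_i}` for `i < m(k)`,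
`μ^k_{m(k)}(x_{m(k)}, dy) = 1_{[0,x_{m(k)}]}(y) (x_{m(k)} - y)^{k_{m(k)}-1}/(k_{m(k)}-1)! dy`,
and `μ^k_i = (x_i^{k_i}/k_i!) δ_0` for `i > m(k)`. -/
theorem stmt_11 {d : ℕ} (A : Finset (Fin d → ℕ)) (h0 : (0 : Fin d → ℕ) ∈ A)
    (hA : ∀ k ∈ A, ∀ ℓ : Fin d → ℕ, ℓ ≤ k → ℓ ∈ A)
    (B : Finset ((Fin d → ℕ) × Fin d))
    (hB : ∀ (k : Fin d → ℕ) (j : Fin d),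
      (k, j) ∈ B ↔ k ∉ A ∧ k j ≠ 0 ∧ (∀ i, i < j → k i = 0) ∧ k - Pi.single j 1 ∈ A)
    (f : (Fin d → ℝ) → ℝ) (hf : ContDiff ℝ (⊤ : ℕ∞) f) (x : Fin d → ℝ) :
    f x = (∑ k ∈ A,
        mderiv (toList k) f 0 * (∏ i, x i ^ k i) / ∏ i, (Nat.factorial (k i) : ℝ))
      + ∑ p ∈ B,
          (∏ i ∈ Finset.univ.filter fun i => p.2 < i,
              x i ^ p.1 i / (Nat.factorial (p.1 i) : ℝ)) *
            ∫ t in (0 : ℝ)..(x p.2),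
              ((x p.2 - t) ^ (p.1 p.2 - 1) / (Nat.factorial (p.1 p.2 - 1) : ℝ)) *
                mderiv (toList p.1) f
                  (fun i => if i < p.2 then x i else if i = p.2 then t else 0) := by
  have hBeq : B = bdry A := by
    ext p
    obtain ⟨k, j⟩ := p
    rw [hB, mem_bdry]
  rw [hBeq]
  exact main f hf x A.card A le_rfl h0 hA
end
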